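/- arXiv:2408.10087 — 5 statements merged into one kernel-verified Lean document; each statement's English description precedes it below -/
import Mathlib

section
/- Let (X,e,μ) be an NP_2-digital H-space. Then X_e, the connected component of e, is NP_2-contractible. -/
/-- A digital image: a finite set with a reflexive, symmetric adjacency relation
(a finite reflexive graph). -/
structure DigImage where
  carrier : Type
  [fintype : Fintype carrier]
  adj : carrier → carrier → Prop
  adj_refl : ∀ x, adj x x
  adj_symm : ∀ {x y}, adj x y → adj y x

attribute [instance] DigImage.fintype

/-- `f : (X,κ) → (Y,λ)` is digitally continuous if it preserves adjacency. -/
def DigContinuous (X Y : DigImage) (f : X.carrier → Y.carrier) : Prop :=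
  ∀ ⦃a b : X.carrier⦄, X.adj a b → Y.adj (f a) (f b)

/-- The product of two digital images with the normal product adjacency `NP_i`
(for `i ≤ 1` this is `NP_1`; otherwise `NP_2`): two pairs are adjacent iff
their coordinates are adjacent in at most `i` positions and equal elsewhere. -/
def DigImage.prod (i : ℕ) (X Y : DigImage) : DigImage where
  carrier := X.carrier × Y.carrier
  adj p q :=
    if i ≤ 1 then (p.1 = q.1 ∧ Y.adj p.2 q.2) ∨ (p.2 = q.2 ∧ X.adj p.1 q.1)
    else X.adj p.1 q.1 ∧ Y.adj p.2 q.2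
  adj_refl p := by
    split_ifs
    · exact Or.inl ⟨rfl, Y.adj_refl p.2⟩
    · exact ⟨X.adj_refl p.1, Y.adj_refl p.2⟩
  adj_symm {p q} h := by
    split_ifs at h ⊢ with hi
    · rcases h with ⟨h1, h2⟩ | ⟨h1, h2⟩
      · exact Or.inl ⟨h1.symm, Y.adj_symm h2⟩
      · exact Or.inr ⟨h1.symm, X.adj_symm h2⟩
    · exact ⟨X.adj_symm h.1, Y.adj_symm h.2⟩

/-- The triple product of digital images with the normal product adjacency `NP_i`:
coordinates adjacent in at most `i` positions and equal in all other positions. -/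
def DigImage.prod3 (i : ℕ) (X Y Z : DigImage) : DigImage where
  carrier := X.carrier × Y.carrier × Z.carrier
  adj p q :=
    if i ≤ 1 then
      (p.1 = q.1 ∧ p.2.1 = q.2.1 ∧ Z.adj p.2.2 q.2.2) ∨
      (p.1 = q.1 ∧ p.2.2 = q.2.2 ∧ Y.adj p.2.1 q.2.1) ∨
      (p.2.1 = q.2.1 ∧ p.2.2 = q.2.2 ∧ X.adj p.1 q.1)
    else
      (p.1 = q.1 ∧ Y.adj p.2.1 q.2.1 ∧ Z.adj p.2.2 q.2.2) ∨
      (p.2.1 = q.2.1 ∧ X.adj p.1 q.1 ∧ Z.adj p.2.2 q.2.2) ∨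
      (p.2.2 = q.2.2 ∧ X.adj p.1 q.1 ∧ Y.adj p.2.1 q.2.1)
  adj_refl p := by
    split_ifs
    · exact Or.inl ⟨rfl, rfl, Z.adj_refl p.2.2⟩
    · exact Or.inl ⟨rfl, Y.adj_refl p.2.1, Z.adj_refl p.2.2⟩
  adj_symm {p q} h := by
    split_ifs at h ⊢ with hi
    · rcases h with ⟨h1, h2, h3⟩ | ⟨h1, h2, h3⟩ | ⟨h1, h2, h3⟩
      · exact Or.inl ⟨h1.symm, h2.symm, Z.adj_symm h3⟩
      · exact Or.inr (Or.inl ⟨h1.symm, h2.symm, Y.adj_symm h3⟩)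
      · exact Or.inr (Or.inr ⟨h1.symm, h2.symm, X.adj_symm h3⟩)
    · rcases h with ⟨h1, h2, h3⟩ | ⟨h1, h2, h3⟩ | ⟨h1, h2, h3⟩
      · exact Or.inl ⟨h1.symm, Y.adj_symm h2, Z.adj_symm h3⟩
      · exact Or.inr (Or.inl ⟨h1.symm, X.adj_symm h2, Z.adj_symm h3⟩)
      · exact Or.inr (Or.inr ⟨h1.symm, X.adj_symm h2, Y.adj_symm h3⟩)

/-- The digital interval `[0,m]_ℤ` with the standard adjacency `|a−b| ≤ 1`. -/
def digInterval (m : ℕ) : DigImage where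
  carrier := Fin (m + 1)
  adj a b := |(a : ℤ) - (b : ℤ)| ≤ 1
  adj_refl a := by simp
  adj_symm {a b} h := by
    have h' : |(a : ℤ) - (b : ℤ)| ≤ 1 := h
    rw [abs_sub_comm] at h'
    exact h'

/-- `f` and `g` are `NP_i`-digitally homotopic: there is an
`NP_i`-continuous `H : X × [0,m]_ℤ → Y` with `H(·,0) = f` and `H(·,m) = g`. -/
def DigHomotopic (i : ℕ) (X Y : DigImage) (f g : X.carrier → Y.carrier) : Prop :=
  ∃ (m : ℕ) (H : X.carrier × Fin (m + 1) → Y.carrier),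
    DigContinuous (DigImage.prod i X (digInterval m)) Y H ∧
    (∀ x, H (x, 0) = f x) ∧ (∀ x, H (x, Fin.last m) = g x)

/-- An `NP_i`-digital H-space `(X,e,μ)`. -/
structure IsHSpace (i : ℕ) (X : DigImage) (e : X.carrier)
    (μ : X.carrier × X.carrier → X.carrier) : Prop where
  continuous : DigContinuous (DigImage.prod i X X) X μ
  right_unit : DigHomotopic i X X (fun x => μ (x, e)) id
  left_unit : DigHomotopic i X X (fun x => μ (e, x)) id

/-- H-equivalence of `NP_i`-digital H-spaces. -/
def HSpaceEquiv (i : ℕ) (X : DigImage) (eX : X.carrier)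
    (μX : X.carrier × X.carrier → X.carrier)
    (Y : DigImage) (eY : Y.carrier)
    (μY : Y.carrier × Y.carrier → Y.carrier) : Prop :=
  ∃ (f : X.carrier → Y.carrier) (g : Y.carrier → X.carrier),
    DigContinuous X Y f ∧ DigContinuous Y X g ∧ f eX = eY ∧ g eY = eX ∧
    DigHomotopic i Y Y (f ∘ g) id ∧ DigHomotopic i X X (g ∘ f) id ∧
    DigHomotopic i (DigImage.prod i X X) Y (fun p => f (μX p)) (fun p => μY (f p.1, f p.2)) ∧
    DigHomotopic i (DigImage.prod i Y Y) X (fun p => g (μY p)) (fun p => μX (g p.1, g p.2))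

/-- `NP_i`-homotopy equivalence of digital images. -/
def DigHtpyEquiv (i : ℕ) (X Y : DigImage) : Prop :=
  ∃ (f : X.carrier → Y.carrier) (g : Y.carrier → X.carrier),
    DigContinuous X Y f ∧ DigContinuous Y X g ∧
    DigHomotopic i X X (g ∘ f) id ∧ DigHomotopic i Y Y (f ∘ g) id

/-- A digital image is `NP_i`-irreducible if it is not `NP_i`-homotopy
equivalent to any digital image with fewer points. -/
def DigIrreducible (i : ℕ) (X : DigImage) : Prop :=
  ¬ ∃ Y : DigImage, Fintype.card Y.carrier < Fintype.card X.carrier ∧ DigHtpyEquiv i X Y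

/-- A digital image is connected if any two points are joined by a path
of consecutively adjacent points. -/
def DigConnected (X : DigImage) : Prop :=
  ∀ a b : X.carrier, Relation.ReflTransGen X.adj a b

/-- A digital image is `NP_i`-contractible if the identity is `NP_i`-homotopic
to a constant map. -/
def DigContractible (i : ℕ) (X : DigImage) : Prop :=
  ∃ c : X.carrier, DigHomotopic i X X id (fun _ => c)

/-- An isomorphism of digital images: a continuous bijection with continuous inverse. -/
def IsDigIso (X Y : DigImage) (f : X.carrier → Y.carrier) : Prop :=
  DigContinuous X Y f ∧ ∃ g : Y.carrier → X.carrier,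
    DigContinuous Y X g ∧ Function.LeftInverse g f ∧ Function.RightInverse g f

/-- The sub-digital-image on the points satisfying `P`, with the induced adjacency. -/
noncomputable def subImage (X : DigImage) (P : X.carrier → Prop) : DigImage where
  carrier := {x : X.carrier // P x}
  fintype := Fintype.ofFinite _
  adj a b := X.adj a.1 b.1
  adj_refl a := X.adj_refl a.1
  adj_symm h := X.adj_symm h

/-- The connected component of `e`, as a digital image. -/
noncomputable def componentImage (X : DigImage) (e : X.carrier) : DigImage :=
  subImage X (fun x => Relation.ReflTransGen X.adj e x)

/-- Homotopy-associativity of an `NP_i`-digital multiplication: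
`μ∘(id × μ) ≃ᵢ μ∘(μ × id)` as maps `X × X × X → X` with `NP_i` adjacency. -/
def HomotopyAssociative (i : ℕ) (X : DigImage)
    (μ : X.carrier × X.carrier → X.carrier) : Prop :=
  DigHomotopic i (DigImage.prod3 i X X X) X
    (fun p => μ (p.1, μ (p.2.1, p.2.2)))
    (fun p => μ (μ (p.1, p.2.1), p.2.2))

/-- `α` is a left homotopy-inverse for the H-space `(X,e,μ)`. -/
def LeftHtpyInverse (i : ℕ) (X : DigImage) (e : X.carrier)
    (μ : X.carrier × X.carrier → X.carrier) (α : X.carrier → X.carrier) : Prop :=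
  DigContinuous X X α ∧ DigContinuous X X (fun x => μ (α x, x)) ∧
  DigHomotopic i X X (fun x => μ (α x, x)) (fun _ => e)

/-- `β` is a right homotopy-inverse for the H-space `(X,e,μ)`. -/
def RightHtpyInverse (i : ℕ) (X : DigImage) (e : X.carrier)
    (μ : X.carrier × X.carrier → X.carrier) (β : X.carrier → X.carrier) : Prop :=
  DigContinuous X X β ∧ DigContinuous X X (fun x => μ (x, β x)) ∧
  DigHomotopic i X X (fun x => μ (x, β x)) (fun _ => e)

/-!
Under the NP₂ product adjacency an NP₂-homotopy is the same thing as a finite chain of maps in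
which consecutive maps send adjacent points to adjacent points; hence NP₂-homotopy is an
equivalence relation compatible with composition.

Induct on the number of points of a connected NP₂-digital H-space `X`. If some map homotopic to
the identity is not surjective, an idempotent iterate of it retracts `X`, up to homotopy, onto a
smaller connected image, which inherits an H-space structure and is contractible by induction.
Otherwise both translations by `e` are automorphisms, carrying the neighbours of `e` onto those of
`μ (e, e)`; NP₂-continuity of `μ` then makes any two neighbours of `μ (e, e)` adjacent, and pushing
`μ (e, e)` onto one of its neighbours is a non-surjective map homotopic to the identity, unless
`X` is a point. The component `X_e` is a retract of `X`, so it inherits the H-space structure.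
-/

open Relation Function

instance (X : DigImage) : Std.Symm X.adj := ⟨fun _ _ => X.adj_symm⟩

theorem digContinuous_id (X : DigImage) : DigContinuous X X id := fun _ _ h => h

theorem DigImage.prod_two_adj (X Y : DigImage) (p q : X.carrier × Y.carrier) :
    (DigImage.prod 2 X Y).adj p q ↔ X.adj p.1 q.1 ∧ Y.adj p.2 q.2 := by
  simp [DigImage.prod]

theorem DigContinuous.map_adj₂ {X Y Z : DigImage} {μ : X.carrier × Y.carrier → Z.carrier}
    (hμ : DigContinuous (DigImage.prod 2 X Y) Z μ) {a a' : X.carrier} {b b' : Y.carrier}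
    (ha : X.adj a a') (hb : Y.adj b b') : Z.adj (μ (a, b)) (μ (a', b')) :=
  hμ ((DigImage.prod_two_adj X Y _ _).2 ⟨ha, hb⟩)

theorem digInterval_adj_iff {m : ℕ} (s t : Fin (m + 1)) :
    (digInterval m).adj s t ↔ |(s : ℤ) - t| ≤ 1 := Iff.rfl

def StepHomotopic (X Y : DigImage) (f g : X.carrier → Y.carrier) : Prop :=
  DigContinuous X Y f ∧ DigContinuous X Y g ∧ ∀ ⦃a b⦄, X.adj a b → Y.adj (f a) (g b)

instance (X Y : DigImage) : Std.Symm (StepHomotopic X Y) :=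
  ⟨fun _ _ h => ⟨h.2.1, h.1, fun _ _ hab => Y.adj_symm (h.2.2 (X.adj_symm hab))⟩⟩

namespace DigHomotopic

variable {X Y Z : DigImage}

theorem head {f g k : X.carrier → Y.carrier} (hfg : StepHomotopic X Y f g)
    (hgk : DigHomotopic 2 X Y g k) : DigHomotopic 2 X Y f k := by
  obtain ⟨m, H, hH, h0, hm⟩ := hgk
  refine ⟨m + 1,
    fun p => Fin.cases (motive := fun _ => Y.carrier) (f p.1) (fun t => H (p.1, t)) p.2,
    ?_, fun _ => rfl, hm⟩
  rintro ⟨a, s⟩ ⟨b, t⟩ hab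
  rw [DigImage.prod_two_adj] at hab
  obtain ⟨hab, hst⟩ := hab
  cases s using Fin.cases <;> cases t using Fin.cases <;>
    simp only [Fin.cases_zero, Fin.cases_succ]
  · exact hfg.1 hab
  case zero.succ t =>
    obtain rfl : t = 0 := Fin.ext (by simp [digInterval_adj_iff, abs_le] at hst; omega)
    exact h0 b ▸ hfg.2.2 hab
  case succ.zero s =>
    obtain rfl : s = 0 := Fin.ext (by simp [digInterval_adj_iff, abs_le] at hst; omega)
    exact h0 a ▸ Y.adj_symm (hfg.2.2 (X.adj_symm hab))
  case succ.succ s t =>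
    refine hH ((DigImage.prod_two_adj _ _ _ _).2 ⟨hab, ?_⟩)
    simpa [digInterval_adj_iff] using hst

theorem two_iff {f g : X.carrier → Y.carrier} :
    DigHomotopic 2 X Y f g ↔ DigContinuous X Y f ∧ ReflTransGen (StepHomotopic X Y) f g := by
  constructor
  · rintro ⟨m, H, hH, h0, hm⟩
    have hslice : ∀ s t : Fin (m + 1), (digInterval m).adj s t →
        ∀ ⦃a b⦄, X.adj a b → Y.adj (H (a, s)) (H (b, t)) :=
      fun s t hst a b hab => hH ((DigImage.prod_two_adj _ _ _ _).2 ⟨hab, hst⟩)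
    have hf : (fun x => H (x, 0)) = f := funext h0
    have hchain : ∀ t : Fin (m + 1), ReflTransGen (StepHomotopic X Y) f (fun x => H (x, t)) := by
      intro t
      induction t using Fin.induction with
      | zero => exact hf ▸ .refl
      | succ t ih =>
        refine ih.tail ⟨hslice _ _ ((digInterval m).adj_refl _),
          hslice _ _ ((digInterval m).adj_refl _), hslice _ _ ?_⟩
        simp [digInterval_adj_iff]
    exact ⟨hf ▸ hslice 0 0 ((digInterval m).adj_refl _), funext hm ▸ hchain (Fin.last m)⟩
  · rintro ⟨hf, hfg⟩
    induction hfg using ReflTransGen.head_induction_on with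
    | refl => exact ⟨0, fun p => g p.1, fun _ _ h => hf ((DigImage.prod_two_adj _ _ _ _).1 h).1,
        fun _ => rfl, fun _ => rfl⟩
    | head hstep _ ih => exact head hstep (ih hstep.2.1)

variable {f g k : X.carrier → Y.carrier}

theorem continuous_left (h : DigHomotopic 2 X Y f g) : DigContinuous X Y f := (two_iff.1 h).1

theorem continuous_right (h : DigHomotopic 2 X Y f g) : DigContinuous X Y g := by
  obtain ⟨hf, hfg⟩ := two_iff.1 h
  rcases hfg.cases_tail with rfl | ⟨_, _, hstep⟩
  exacts [hf, hstep.2.1]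

theorem refl (hf : DigContinuous X Y f) : DigHomotopic 2 X Y f f := two_iff.2 ⟨hf, .refl⟩

theorem of_step (h : StepHomotopic X Y f g) : DigHomotopic 2 X Y f g :=
  two_iff.2 ⟨h.1, .single h⟩

theorem symm (h : DigHomotopic 2 X Y f g) : DigHomotopic 2 X Y g f :=
  two_iff.2 ⟨h.continuous_right, _root_.symm (two_iff.1 h).2⟩

theorem trans (hfg : DigHomotopic 2 X Y f g) (hgk : DigHomotopic 2 X Y g k) :
    DigHomotopic 2 X Y f k :=
  two_iff.2 ⟨hfg.continuous_left, (two_iff.1 hfg).2.trans (two_iff.1 hgk).2⟩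

theorem comp_left (h : DigHomotopic 2 X Y f g) {φ : Y.carrier → Z.carrier}
    (hφ : DigContinuous Y Z φ) : DigHomotopic 2 X Z (φ ∘ f) (φ ∘ g) := by
  refine two_iff.2 ⟨fun _ _ hab => hφ (h.continuous_left hab),
    ReflTransGen.lift (φ ∘ ·) ?_ _ _ (two_iff.1 h).2⟩
  exact fun _ _ hs => ⟨fun _ _ hab => hφ (hs.1 hab), fun _ _ hab => hφ (hs.2.1 hab),
    fun _ _ hab => hφ (hs.2.2 hab)⟩

theorem comp_right {f g : Y.carrier → Z.carrier} (h : DigHomotopic 2 Y Z f g)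
    {ψ : X.carrier → Y.carrier} (hψ : DigContinuous X Y ψ) :
    DigHomotopic 2 X Z (f ∘ ψ) (g ∘ ψ) := by
  refine two_iff.2 ⟨fun _ _ hab => h.continuous_left (hψ hab),
    ReflTransGen.lift (· ∘ ψ) ?_ _ _ (two_iff.1 h).2⟩
  exact fun _ _ hs => ⟨fun _ _ hab => hs.1 (hψ hab), fun _ _ hab => hs.2.1 (hψ hab),
    fun _ _ hab => hs.2.2 (hψ hab)⟩

theorem path (h : DigHomotopic 2 X Y f g) (x : X.carrier) : ReflTransGen Y.adj (f x) (g x) :=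
  ReflTransGen.lift (fun φ => φ x) (fun _ _ hs => hs.2.2 (X.adj_refl x)) _ _ (two_iff.1 h).2

theorem iterate {f : X.carrier → X.carrier} (h : DigHomotopic 2 X X id f) (n : ℕ) :
    DigHomotopic 2 X X id f^[n] := by
  induction n with
  | zero => exact refl (digContinuous_id X)
  | succ n ih => exact Function.iterate_succ f n ▸ h.trans (ih.comp_right h.continuous_right)

end DigHomotopic

theorem Function.exists_iterate_idempotent {α : Type*} [Finite α] (f : α → α) :
    ∃ n, 0 < n ∧ f^[n] ∘ f^[n] = f^[n] := by
  obtain ⟨a, b, hab, h⟩ := Finite.exists_ne_map_eq_of_infinite fun k : ℕ => f^[k]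
  wlog hlt : a < b generalizing a b
  · exact this b a hab.symm h.symm (by omega)
  have hper : ∀ n, a ≤ n → f^[n + (b - a)] = f^[n] := fun n hn => by
    rw [show n + (b - a) = (n - a) + b by omega, Function.iterate_add, ← h,
      ← Function.iterate_add, Nat.sub_add_cancel hn]
  have hmul : ∀ k, f^[(b - a) * (a + 1) + (b - a) * k] = f^[(b - a) * (a + 1)] := by
    intro k
    induction k with
    | zero => rfl
    | succ k ih =>
      rw [show (b - a) * (a + 1) + (b - a) * (k + 1) = (b - a) * (a + 1) + (b - a) * k + (b - a)
        by ring, hper _ (by nlinarith [show 1 ≤ b - a by omega]), ih]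
  exact ⟨(b - a) * (a + 1), Nat.mul_pos (by omega) (by omega), by rw [← Function.iterate_add, hmul]⟩

theorem DigHomotopic.exists_inverse {X : DigImage} {f : X.carrier → X.carrier}
    (h : DigHomotopic 2 X X id f) (hs : Surjective f) :
    ∃ g, DigHomotopic 2 X X id g ∧ LeftInverse g f ∧ RightInverse g f := by
  obtain ⟨n, hn, hidem⟩ := Function.exists_iterate_idempotent f
  have hid : f^[n] = id := funext fun x =>
    (Finite.injective_iff_surjective.2 hs).iterate n (congrFun hidem x)
  refine ⟨f^[n - 1], h.iterate _, fun x => ?_, fun x => ?_⟩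
  · rw [← Function.iterate_succ_apply, Nat.succ_eq_add_one, Nat.sub_add_cancel hn, hid, id]
  · rw [← Function.iterate_succ_apply' f, Nat.succ_eq_add_one, Nat.sub_add_cancel hn, hid, id]

theorem DigHomotopic.exists_smaller_retract {X : DigImage} {f : X.carrier → X.carrier}
    (hf : DigHomotopic 2 X X id f) (hfs : ¬ Surjective f) :
    ∃ (B : DigImage) (ι : B.carrier → X.carrier) (r : X.carrier → B.carrier),
      DigContinuous B X ι ∧ DigContinuous X B r ∧ LeftInverse r ι ∧
      DigHomotopic 2 X X id (ι ∘ r) ∧ Fintype.card B.carrier < Fintype.card X.carrier := by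
  obtain ⟨n, hn, hidem⟩ := Function.exists_iterate_idempotent f
  have hg := hf.iterate n
  obtain ⟨w, hw⟩ : ∃ w, w ∉ Set.range f := by simpa [Surjective] using hfs
  have hwg : w ∉ Set.range f^[n] := by
    rintro ⟨x, rfl⟩
    exact hw ⟨f^[n - 1] x, by
      rw [← Function.iterate_succ_apply' f, Nat.succ_eq_add_one, Nat.sub_add_cancel hn]⟩
  refine ⟨subImage X (· ∈ Set.range f^[n]), Subtype.val, fun x => ⟨f^[n] x, x, rfl⟩,
    fun _ _ h => h, fun _ _ h => hg.continuous_right h, ?_, hg, ?_⟩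
  · rintro ⟨_, x, rfl⟩
    exact Subtype.ext (congrFun hidem x)
  · simp only [Fintype.card_eq_nat_card]
    exact Finite.card_subtype_lt hwg

theorem DigContractible.of_retract {X B : DigImage} {ι : B.carrier → X.carrier}
    {r : X.carrier → B.carrier} (hι : DigContinuous B X ι) (hr : DigContinuous X B r)
    (h : DigHomotopic 2 X X id (ι ∘ r)) (hB : DigContractible 2 B) : DigContractible 2 X := by
  obtain ⟨c, hc⟩ := hB
  exact ⟨ι c, h.trans ((hc.comp_left hι).comp_right hr)⟩

theorem DigConnected.exists_adj_ne {X : DigImage} [Nontrivial X.carrier] (hX : DigConnected X)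
    (x : X.carrier) : ∃ z, X.adj x z ∧ z ≠ x := by
  by_contra! hx
  have hstuck : ∀ y, ReflTransGen X.adj x y → y = x := fun y hy => by
    induction hy with
    | refl => rfl
    | tail _ hadj ih => exact hx _ (ih ▸ hadj)
  obtain ⟨y, hy⟩ := exists_ne x
  exact hy (hstuck y (hX x y))

theorem DigConnected.of_surjective {X Y : DigImage} (hX : DigConnected X)
    {f : X.carrier → Y.carrier} (hf : DigContinuous X Y f) (hs : Surjective f) :
    DigConnected Y := by
  intro a b
  obtain ⟨x, rfl⟩ := hs a
  obtain ⟨y, rfl⟩ := hs b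
  exact ReflTransGen.lift f (fun _ _ h => hf h) _ _ (hX x y)

theorem exists_homotopic_id_not_surjective_of_clique {X : DigImage} {x z : X.carrier}
    (hxz : X.adj x z) (hzx : z ≠ x) (hclique : ∀ u v, X.adj x u → X.adj x v → X.adj u v) :
    ∃ f, DigHomotopic 2 X X id f ∧ ¬ Surjective f := by
  classical
  have hmove : ∀ ⦃a b⦄, X.adj a b → X.adj a (update id x z b) := fun a b hab => by
    rcases eq_or_ne b x with rfl | hb
    · simpa using hclique a z (X.adj_symm hab) hxz
    · simpa [hb] using hab
  have hcont : DigContinuous X X (update id x z) := fun a b hab => by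
    rcases eq_or_ne a x with rfl | ha
    · simpa using X.adj_symm (hmove (X.adj_symm (hmove hab)))
    · simpa [ha] using hmove hab
  refine ⟨update id x z, DigHomotopic.of_step ⟨digContinuous_id X, hcont, hmove⟩, fun hs => ?_⟩
  obtain ⟨y, hy⟩ := hs x
  rcases eq_or_ne y x with rfl | hyx
  · exact hzx (by rwa [update_self] at hy)
  · exact hyx (by rwa [update_of_ne hyx] at hy)

namespace IsHSpace

variable {X : DigImage} {e : X.carrier} {μ : X.carrier × X.carrier → X.carrier}

theorem homotopic_mul_left_of_path (h : IsHSpace 2 X e μ) {c c' : X.carrier}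
    (hc : ReflTransGen X.adj c c') :
    DigHomotopic 2 X X (fun x => μ (c, x)) (fun x => μ (c', x)) := by
  have hcont : ∀ c, DigContinuous X X fun x => μ (c, x) :=
    fun c _ _ hab => h.continuous.map_adj₂ (X.adj_refl c) hab
  refine DigHomotopic.two_iff.2 ⟨hcont c, ReflTransGen.lift (fun c x => μ (c, x)) ?_ _ _ hc⟩
  exact fun c c' hcc' => ⟨hcont c, hcont c', fun _ _ hab => h.continuous.map_adj₂ hcc' hab⟩

theorem homotopic_mul_right_of_path (h : IsHSpace 2 X e μ) {c c' : X.carrier}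
    (hc : ReflTransGen X.adj c c') :
    DigHomotopic 2 X X (fun x => μ (x, c)) (fun x => μ (x, c')) := by
  have hcont : ∀ c, DigContinuous X X fun x => μ (x, c) :=
    fun c _ _ hab => h.continuous.map_adj₂ hab (X.adj_refl c)
  refine DigHomotopic.two_iff.2 ⟨hcont c, ReflTransGen.lift (fun c x => μ (x, c)) ?_ _ _ hc⟩
  exact fun c c' hcc' => ⟨hcont c, hcont c', fun _ _ hab => h.continuous.map_adj₂ hab hcc'⟩

theorem retract (h : IsHSpace 2 X e μ) {B : DigImage} {ι : B.carrier → X.carrier}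
    {r : X.carrier → B.carrier} (hι : DigContinuous B X ι) (hr : DigContinuous X B r)
    (hri : LeftInverse r ι) (he : ReflTransGen X.adj (ι (r e)) e) :
    IsHSpace 2 B (r e) fun p => r (μ (ι p.1, ι p.2)) where
  continuous p q hpq := by
    obtain ⟨h₁, h₂⟩ := (DigImage.prod_two_adj B B p q).1 hpq
    exact hr (h.continuous.map_adj₂ (hι h₁) (hι h₂))
  right_unit := by
    have := (((h.homotopic_mul_right_of_path he).trans h.right_unit).comp_left hr).comp_right hι
    convert this using 1
    exacts [rfl, (funext hri).symm]
  left_unit := by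
    have := (((h.homotopic_mul_left_of_path he).trans h.left_unit).comp_left hr).comp_right hι
    convert this using 1
    exacts [rfl, (funext hri).symm]

theorem exists_homotopic_id_not_surjective [Nontrivial X.carrier] (h : IsHSpace 2 X e μ)
    (hX : DigConnected X) : ∃ f, DigHomotopic 2 X X id f ∧ ¬ Surjective f := by
  by_contra! hsurj
  obtain ⟨L, hL, hLl, hLr⟩ := h.left_unit.symm.exists_inverse (hsurj _ h.left_unit.symm)
  obtain ⟨R, hR, hRl, hRr⟩ := h.right_unit.symm.exists_inverse (hsurj _ h.right_unit.symm)
  have hclique : ∀ u v, X.adj (μ (e, e)) u → X.adj (μ (e, e)) v → X.adj u v := by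
    intro u v hu hv
    have hRu : X.adj (R u) e := hRl e ▸ X.adj_symm (hR.continuous_right hu)
    have hLv : X.adj e (L v) := hLl e ▸ hL.continuous_right hv
    simpa only [hRr u, hLr v] using h.continuous.map_adj₂ hRu hLv
  obtain ⟨z, hz, hzm⟩ := hX.exists_adj_ne (μ (e, e))
  obtain ⟨f, hf, hfs⟩ := exists_homotopic_id_not_surjective_of_clique hz hzm hclique
  exact hfs (hsurj f hf)

theorem digContractible (h : IsHSpace 2 X e μ) (hX : DigConnected X) : DigContractible 2 X := by
  induction hn : Fintype.card X.carrier using Nat.strong_induction_on generalizing X e μ with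
  | _ n ih =>
  rcases subsingleton_or_nontrivial X.carrier with _ | _
  · exact ⟨e, funext (fun x => Subsingleton.elim x e) ▸ DigHomotopic.refl (digContinuous_id X)⟩
  obtain ⟨f, hf, hfs⟩ := h.exists_homotopic_id_not_surjective hX
  obtain ⟨B, ι, r, hι, hr, hri, hιr, hcard⟩ := hf.exists_smaller_retract hfs
  have hB : DigContractible 2 B :=
    ih _ (hn ▸ hcard) (h.retract hι hr hri (_root_.symm (hιr.path e)))
      (hX.of_surjective hr hri.surjective) rfl
  exact hB.of_retract hι hr hιr

end IsHSpace

theorem componentImage_connected (X : DigImage) (e : X.carrier) :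
    DigConnected (componentImage X e) := by
  have hbase : ∀ b : (componentImage X e).carrier,
      ReflTransGen (componentImage X e).adj ⟨e, .refl⟩ b := by
    rintro ⟨x, hx⟩
    induction hx with
    | refl => exact .refl
    | tail _ hadj ih => exact ih.tail hadj
  exact fun a b => (_root_.symm (hbase a)).trans (hbase b)

open Classical in
noncomputable def componentRetraction (X : DigImage) (e : X.carrier) :
    X.carrier → (componentImage X e).carrier :=
  fun x => if hx : ReflTransGen X.adj e x then ⟨x, hx⟩ else ⟨e, .refl⟩

theorem componentRetraction_of_mem {X : DigImage} {e x : X.carrier} (hx : ReflTransGen X.adj e x) :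
    componentRetraction X e x = ⟨x, hx⟩ := dif_pos hx

theorem componentRetraction_of_not_mem {X : DigImage} {e x : X.carrier}
    (hx : ¬ ReflTransGen X.adj e x) : componentRetraction X e x = ⟨e, .refl⟩ := dif_neg hx

theorem componentRetraction_val (X : DigImage) (e : X.carrier) :
    LeftInverse (componentRetraction X e) Subtype.val := fun b =>
  componentRetraction_of_mem b.2

theorem componentRetraction_continuous (X : DigImage) (e : X.carrier) :
    DigContinuous X (componentImage X e) (componentRetraction X e) := by
  intro a b hab
  by_cases ha : ReflTransGen X.adj e a
  · rw [componentRetraction_of_mem ha, componentRetraction_of_mem (ha.tail hab)]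
    exact hab
  · have hb : ¬ ReflTransGen X.adj e b := fun hb => ha (hb.tail (X.adj_symm hab))
    rw [componentRetraction_of_not_mem ha, componentRetraction_of_not_mem hb]
    exact X.adj_refl e

/-- In an `NP_2`-digital H-space `(X,e,μ)`, the connected
component of `e` is `NP_2`-contractible. -/
theorem np2_component_contractible (X : DigImage) (e : X.carrier)
    (μ : X.carrier × X.carrier → X.carrier) (h : IsHSpace 2 X e μ) :
    DigContractible 2 (componentImage X e) := by
  have hcomp := h.retract (B := componentImage X e) (ι := Subtype.val) (fun _ _ hab => hab)
    (componentRetraction_continuous X e) (componentRetraction_val X e)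
    (by rw [componentRetraction_of_mem .refl])
  exact hcomp.digContractible (componentImage_connected X e)
end

section
/- Let (Z,τ) be an NP_i-digital magma (i ∈ {1,2}), and let X = Z ⊔ {e} be the digital image obtained by adjoining to Z a new point e which is adjacent only to itself. Define μ : X × X → X by μ(a,b) = τ(a,b) if a,b ∈ Z, μ(a,e) = a, and μ(e,b) = b. Then μ is (NP_i, κ)-continuous and (X,e,μ) is a unital NP_i-digital H-space. -/
/-- The digital image obtained from `Z` by adjoining a new isolated point
(adjacent only to itself), modeled by `Option Z.carrier` with the new point `none`. -/
def adjoinPoint (Z : DigImage) : DigImage where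
  carrier := Option Z.carrier
  adj a b :=
    match a, b with
    | some a, some b => Z.adj a b
    | none, none => True
    | _, _ => False
  adj_refl a := by
    cases a with
    | none => trivial
    | some a => exact Z.adj_refl a
  adj_symm {a b} h := by
    cases a <;> cases b
    · trivial
    · exact h.elim
    · exact h.elim
    · exact Z.adj_symm h

/-- The multiplication on `Z ⊔ {e}` extending a magma operation `τ` on `Z`
with `e` (i.e. `none`) as a unit. -/
def adjoinMul (Z : DigImage) (τ : Z.carrier × Z.carrier → Z.carrier) :
    (adjoinPoint Z).carrier × (adjoinPoint Z).carrier → (adjoinPoint Z).carrier :=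
  fun p =>
    match p with
    | (some a, some b) => some (τ (a, b))
    | (some a, none) => some a
    | (none, b) => b

/-- Adjoining a disjoint unit point to an `NP_i`-digital magma
`(Z,τ)` gives a unital `NP_i`-digital H-space `(Z ⊔ {e}, e, μ)`. -/
theorem adjoin_point_hspace (i : ℕ) (hi : i = 1 ∨ i = 2) (Z : DigImage)
    (τ : Z.carrier × Z.carrier → Z.carrier)
    (hτ : DigContinuous (DigImage.prod i Z Z) Z τ) :
    DigContinuous (DigImage.prod i (adjoinPoint Z) (adjoinPoint Z)) (adjoinPoint Z)
      (adjoinMul Z τ) ∧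
    IsHSpace i (adjoinPoint Z) none (adjoinMul Z τ) ∧
    (∀ x, adjoinMul Z τ (x, none) = x ∧ adjoinMul Z τ (none, x) = x) := by
  have hunit : ∀ x : (adjoinPoint Z).carrier,
      adjoinMul Z τ (x, none) = x ∧ adjoinMul Z τ (none, x) = x := by
    intro x; cases x <;> exact ⟨rfl, rfl⟩
  have hH : ∀ f : (adjoinPoint Z).carrier → (adjoinPoint Z).carrier,
      (∀ x, f x = x) → DigHomotopic i (adjoinPoint Z) (adjoinPoint Z) f id := by
    intro f hf
    refine ⟨0, fun p => p.1, ?_, fun x => (hf x).symm, fun x => rfl⟩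
    rintro ⟨p1, p2⟩ ⟨q1, q2⟩ h
    rcases hi with rfl | rfl
    · simp only [DigImage.prod, if_pos (le_refl 1)] at h
      rcases h with ⟨h1, _⟩ | ⟨_, h1⟩
      · exact h1 ▸ (adjoinPoint Z).adj_refl q1
      · exact h1
    · simp only [DigImage.prod, if_neg (by norm_num : ¬ (2:ℕ) ≤ 1)] at h
      exact h.1
  have hcont : DigContinuous (DigImage.prod i (adjoinPoint Z) (adjoinPoint Z))
      (adjoinPoint Z) (adjoinMul Z τ) := by
    rintro ⟨p1, p2⟩ ⟨q1, q2⟩ h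
    rcases hi with rfl | rfl
    · simp only [DigImage.prod, if_pos (le_refl 1)] at h
      rcases h with ⟨h1, h2⟩ | ⟨h2, h1⟩
      · -- p1 = q1, adj p2 q2
        cases h1
        cases p1 with
        | none => exact h2
        | some a =>
          cases p2 with
          | none =>
            cases q2 with
            | none => exact Z.adj_refl a
            | some b => exact h2.elim
          | some b =>
            cases q2 with
            | none => exact h2.elim
            | some b' =>
              exact hτ (show (DigImage.prod 1 Z Z).adj (a, b) (a, b') by
                simp only [DigImage.prod, if_pos (le_refl 1)]
                exact Or.inl ⟨trivial, h2⟩)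
      · -- p2 = q2, adj p1 q1
        cases h2
        cases p1 with
        | none =>
          cases q1 with
          | none => exact (adjoinPoint Z).adj_refl _
          | some a => exact h1.elim
        | some a =>
          cases q1 with
          | none => exact h1.elim
          | some a' =>
            cases p2 with
            | none => exact h1
            | some b =>
              exact hτ (show (DigImage.prod 1 Z Z).adj (a, b) (a', b) by
                simp only [DigImage.prod, if_pos (le_refl 1)]
                exact Or.inr ⟨trivial, h1⟩)
    · simp only [DigImage.prod, if_neg (by norm_num : ¬ (2:ℕ) ≤ 1)] at h
      obtain ⟨h1, h2⟩ := h
      cases p1 with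
      | none =>
        cases q1 with
        | none => exact h2
        | some => exact h1.elim
      | some a =>
        cases q1 with
        | none => exact h1.elim
        | some a' =>
          cases p2 with
          | none =>
            cases q2 with
            | none => exact h1
            | some => exact h2.elim
          | some b =>
            cases q2 with
            | none => exact h2.elim
            | some b' =>
              exact hτ (show (DigImage.prod 2 Z Z).adj (a, b) (a', b') by
                simp only [DigImage.prod, if_neg (by norm_num : ¬ (2:ℕ) ≤ 1)]
                exact ⟨h1, h2⟩)
  refine ⟨hcont, ⟨hcont, ?_, ?_⟩, hunit⟩
  · exact hH _ fun x => (hunit x).1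
  · exact hH _ fun x => (hunit x).2
end

section
/- Let (X,e,μ) be an NP_2-digital H-space with X NP_2-irreducible. Then {e} is a connected component of X, so X = {e} ⊔ Z where Z = X \ {e}; moreover e is a unit for μ, and there exist an (NP_2,κ)-continuous map τ : Z × Z → Z and a subset A ⊆ Z × Z which is a union of connected components of Z × Z (with NP_2 adjacency) such that μ(x,y) = τ(x,y) for (x,y) ∈ A, μ(x,e) = x for all x, μ(e,y) = y for all y, and μ(x,y) = e for all (x,y) ∈ (Z × Z) \ A. -/
/-!
In an `NP_2`-irreducible image no point `x₀` has its neighbourhood contained in that of another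
point `c`: otherwise folding `x₀` onto `c` is a homotopy equivalence with `X \ {x₀}`. This makes
homotopies rigid: if `H` is an `NP_2`-homotopy ending at the identity, then each `H (x, t)` is
adjacent to every neighbour of `x` (these are the values of the next stage), so `H (x, t) = x`
by descending induction on `t`. Hence the units of an H-space are strict. If `y ∼ e`, then
`μ (y, x) ∼ μ (e, x') = x'` for every neighbour `x'` of `x`, so `μ (y, ·) = id` and
`y = μ (y, e) = e`: the unit is isolated. Continuity of `μ` then forces the fibre `μ⁻¹(e)` to
be a union of components, and off it `μ` corestricts to `X \ {e}`.
-/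

namespace DigImage

lemma prod_two_adj_iff (X Y : DigImage) {p q : (prod 2 X Y).carrier} :
    (prod 2 X Y).adj p q ↔ X.adj p.1 q.1 ∧ Y.adj p.2 q.2 := by
  change (if 2 ≤ 1 then (p.1 = q.1 ∧ Y.adj p.2 q.2) ∨ (p.2 = q.2 ∧ X.adj p.1 q.1)
    else X.adj p.1 q.1 ∧ Y.adj p.2 q.2) ↔ _
  rw [if_neg (by norm_num)]

lemma prod_adj_fst {i : ℕ} {X Y : DigImage} {p q : (prod i X Y).carrier}
    (h : (prod i X Y).adj p q) : X.adj p.1 q.1 := by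
  change if i ≤ 1 then _ else _ at h
  split_ifs at h
  · rcases h with ⟨hpq, -⟩ | ⟨-, hpq⟩
    · exact hpq ▸ X.adj_refl _
    · exact hpq
  · exact h.1

end DigImage

lemma digInterval_adj_castSucc_succ {m : ℕ} (t : Fin m) :
    (digInterval m).adj t.castSucc t.succ := by
  change |((t.castSucc : ℕ) : ℤ) - ((t.succ : ℕ) : ℤ)| ≤ 1
  simp

section Fold

open Classical in
noncomputable def foldPoint {α : Type*} {x₀ c : α} (hc : c ≠ x₀) (x : α) : {y : α // y ≠ x₀} :=
  if hx : x = x₀ then ⟨c, hc⟩ else ⟨x, hx⟩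

lemma foldPoint_val {α : Type*} {x₀ c : α} (hc : c ≠ x₀) (y : {y : α // y ≠ x₀}) :
    foldPoint hc y.1 = y := by
  rw [foldPoint, dif_neg y.2]

variable {X : DigImage} {x₀ c : X.carrier} (hdom : ∀ x', X.adj x₀ x' → X.adj c x')
include hdom

lemma adj_foldPoint_left (hc : c ≠ x₀) {a b : X.carrier} (hab : X.adj a b) :
    X.adj (foldPoint hc a).1 b := by
  unfold foldPoint
  split_ifs with ha
  · exact hdom b (ha ▸ hab)
  · exact hab

lemma digContinuous_foldPoint (hc : c ≠ x₀) :
    DigContinuous X (subImage X (· ≠ x₀)) (foldPoint hc) := fun _ _ hab =>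
  X.adj_symm (adj_foldPoint_left hdom hc (X.adj_symm (adj_foldPoint_left hdom hc hab)))

lemma digHtpyEquiv_subImage_ne (i : ℕ) (hc : c ≠ x₀) :
    DigHtpyEquiv i X (subImage X (· ≠ x₀)) := by
  refine ⟨foldPoint hc, Subtype.val, digContinuous_foldPoint hdom hc, fun _ _ h => h, ?_, ?_⟩
  · refine ⟨1, fun p => if p.2 = 0 then (foldPoint hc p.1).1 else p.1, ?_, fun _ => if_pos rfl,
    fun _ => if_neg (by decide : (Fin.last 1 : Fin 2) ≠ 0)⟩
    intro p q hpq
    have hab := DigImage.prod_adj_fst hpq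
    dsimp only
    split_ifs
    · exact digContinuous_foldPoint hdom hc hab
    · exact adj_foldPoint_left hdom hc hab
    · exact X.adj_symm (adj_foldPoint_left hdom hc (X.adj_symm hab))
    · exact hab
  · exact ⟨0, Prod.fst, fun _ _ => DigImage.prod_adj_fst, fun y => (foldPoint_val hc y).symm,
      fun _ => rfl⟩

end Fold

lemma card_subImage_ne_lt (X : DigImage) (x₀ : X.carrier) :
    Fintype.card (subImage X (· ≠ x₀)).carrier < Fintype.card X.carrier :=
  Fintype.card_lt_of_injective_of_notMem _ Subtype.val_injective
    (b := x₀) (by rintro ⟨y, hy⟩; exact y.2 hy)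

namespace DigIrreducible

variable {X : DigImage}

lemma eq_of_forall_adj_imp_adj {i : ℕ} (hirr : DigIrreducible i X) {x₀ c : X.carrier}
    (hdom : ∀ x', X.adj x₀ x' → X.adj c x') : c = x₀ := by
  by_contra hc
  exact hirr ⟨_, card_subImage_ne_lt X x₀, digHtpyEquiv_subImage_ne hdom i hc⟩

lemma eq_of_homotopic_id (hirr : DigIrreducible 2 X) {f : X.carrier → X.carrier}
    (hf : DigHomotopic 2 X X f id) (x : X.carrier) : f x = x := by
  obtain ⟨m, H, hH, h0, hm⟩ := hf
  have stage : ∀ t : Fin (m + 1), ∀ x, H (x, t) = x := by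
    intro t
    induction t using Fin.reverseInduction with
    | last => exact hm
    | cast t ih =>
      intro x
      refine hirr.eq_of_forall_adj_imp_adj fun x' hx' => ?_
      have hadj : X.adj (H (x, t.castSucc)) (H (x', t.succ)) :=
        hH ((DigImage.prod_two_adj_iff _ _).mpr ⟨hx', digInterval_adj_castSucc_succ t⟩)
      rwa [ih x'] at hadj
  rw [← h0, stage]

lemma eq_of_adj_unit (hirr : DigIrreducible 2 X) {e : X.carrier}
    {μ : X.carrier × X.carrier → X.carrier} (hμ : DigContinuous (DigImage.prod 2 X X) X μ)
    (hl : ∀ y, μ (e, y) = y) (hr : ∀ x, μ (x, e) = x) {y : X.carrier} (hy : X.adj e y) : y = e := by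
  have hμy : ∀ x, μ (y, x) = x := fun x => hirr.eq_of_forall_adj_imp_adj fun x' hx' => by
    simpa only [hl] using
      hμ ((DigImage.prod_two_adj_iff X X).mpr ⟨X.adj_symm hy, hx'⟩ :
        (DigImage.prod 2 X X).adj (y, x) (e, x'))
  rw [← hr y, hμy]

end DigIrreducible

open Classical in
noncomputable def corestrictNe {α β : Type*} (e : β) (f : α → β) (d : α → {y : β // y ≠ e})
    (a : α) : {y : β // y ≠ e} :=
  if ha : f a = e then d a else ⟨f a, ha⟩

lemma corestrictNe_val {α β : Type*} {e : β} {f : α → β} {d : α → {y : β // y ≠ e}} {a : α}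
    (ha : f a ≠ e) : (corestrictNe e f d a).1 = f a := by
  rw [corestrictNe, dif_neg ha]

section Isolated

variable {X : DigImage} {e : X.carrier} (hiso : ∀ y, X.adj e y → y = e)
include hiso

lemma eq_of_reflTransGen_of_isolated {x : X.carrier} (hx : Relation.ReflTransGen X.adj e x) :
    x = e := by
  induction hx with
  | refl => rfl
  | tail _ hyz ih => exact hiso _ (ih ▸ hyz)

lemma eq_iff_eq_of_adj_of_isolated {P : DigImage} {f : P.carrier → X.carrier}
    (hf : DigContinuous P X f) {p q : P.carrier} (hpq : P.adj p q) : f p = e ↔ f q = e :=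
  ⟨fun hp => hiso _ (hp ▸ hf hpq), fun hq => hiso _ (hq ▸ hf (P.adj_symm hpq))⟩

lemma digContinuous_corestrictNe {P : DigImage} {f : P.carrier → X.carrier}
    (hf : DigContinuous P X f) {d : P.carrier → {x : X.carrier // x ≠ e}}
    (hd : DigContinuous P (subImage X (· ≠ e)) d) :
    DigContinuous P (subImage X (· ≠ e)) (corestrictNe e f d) := by
  intro p q hpq
  have hfe := eq_iff_eq_of_adj_of_isolated hiso hf hpq
  unfold corestrictNe
  split_ifs with hp hq hq
  · exact hd hpq
  · exact absurd (hfe.mp hp) hq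
  · exact absurd (hfe.mpr hq) hp
  · exact hf hpq

end Isolated

/-- Classification of irreducible `NP_2`-digital H-spaces:
`{e}` is a connected component, `e` is a unit, and on `Z = X \ {e}` the
multiplication is given by a magma operation `τ` on a union of components
`A ⊆ Z × Z`, and by `e` elsewhere. -/
theorem np2_hspace_classification (X : DigImage) (e : X.carrier)
    (μ : X.carrier × X.carrier → X.carrier) (h : IsHSpace 2 X e μ)
    (hirr : DigIrreducible 2 X) :
    (∀ x, Relation.ReflTransGen X.adj e x → x = e) ∧
    (∀ x, μ (x, e) = x) ∧
    (∀ y, μ (e, y) = y) ∧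
    ∃ τ : (subImage X (· ≠ e)).carrier × (subImage X (· ≠ e)).carrier →
          (subImage X (· ≠ e)).carrier,
      DigContinuous (DigImage.prod 2 (subImage X (· ≠ e)) (subImage X (· ≠ e)))
        (subImage X (· ≠ e)) τ ∧
      ∃ A : Set ((subImage X (· ≠ e)).carrier × (subImage X (· ≠ e)).carrier),
        (∀ p q, p ∈ A →
          (DigImage.prod 2 (subImage X (· ≠ e)) (subImage X (· ≠ e))).adj p q →
          q ∈ A) ∧
        (∀ p ∈ A, μ (p.1.1, p.2.1) = (τ p).1) ∧
        (∀ p ∉ A, μ ((p : (subImage X (· ≠ e)).carrier ×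
          (subImage X (· ≠ e)).carrier).1.1, p.2.1) = e) := by
  let Z := subImage X (· ≠ e)
  let μZ : Z.carrier × Z.carrier → X.carrier := fun p => μ (p.1.1, p.2.1)
  have hr := hirr.eq_of_homotopic_id h.right_unit
  have hl := hirr.eq_of_homotopic_id h.left_unit
  have hiso : ∀ y, X.adj e y → y = e := fun _ => hirr.eq_of_adj_unit h.continuous hl hr
  have hμZ : DigContinuous (DigImage.prod 2 Z Z) X μZ := fun p q hpq =>
    h.continuous ((DigImage.prod_two_adj_iff X X).mpr ((DigImage.prod_two_adj_iff Z Z).mp hpq))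
  refine ⟨fun _ => eq_of_reflTransGen_of_isolated hiso, hr, hl, corestrictNe e μZ Prod.fst, ?_,
    {p | μZ p ≠ e}, ?_, ?_, fun _ hp => not_not.mp hp⟩
  · exact digContinuous_corestrictNe hiso hμZ fun _ _ => DigImage.prod_adj_fst
  · exact fun p q hp hpq => mt (eq_iff_eq_of_adj_of_isolated hiso hμZ hpq).mpr hp
  · exact fun p hp => (corestrictNe_val hp).symm
end

section
/- Let G be an NP_1-digital topological group, and let S = {s ∈ G : s ∼ e} be the set of all points adjacent to the group identity element e. Then the adjacency of G coincides with that of the Cayley graph Γ(G,S): for all a, b ∈ G, a ∼ b if and only if ab⁻¹ ∈ S. -/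
/-- Any `NP_1`-digital topological group is the Cayley graph
`Γ(G,S)` where `S` is the set of points adjacent to the identity:
`a ∼ b` iff `ab⁻¹ ∈ S` or `ba⁻¹ ∈ S`. -/
theorem np1_dtg_is_cayley_graph (G : DigImage) [Group G.carrier]
    (hmul : DigContinuous (DigImage.prod 1 G G) G (fun p => p.1 * p.2))
    (hinv : DigContinuous G G (fun a => a⁻¹)) :
    ∀ a b : G.carrier,
      G.adj a b ↔
        (a * b⁻¹ ∈ {s : G.carrier | G.adj s 1} ∨
         b * a⁻¹ ∈ {s : G.carrier | G.adj s 1}) := by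
  have hright : ∀ (x a b : G.carrier), G.adj a b → G.adj (a * x) (b * x) := by
    intro x a b h
    exact hmul (a := (a, x)) (b := (b, x)) (Or.inr ⟨rfl, h⟩)
  intro a b
  constructor
  · intro h
    left
    have := hright b⁻¹ a b h
    simpa using this
  · rintro (h | h)
    · have := hright b (a * b⁻¹) 1 h
      simpa using this
    · have := hright a (b * a⁻¹) 1 h
      exact G.adj_symm (by simpa using this)
end

section
/- Let G be a connected NP_1-digital topological group with identity e, and let S = {s ∈ G : s ∼ e} be the set of points adjacent to e. Then S generates G as a group, and the adjacency of G coincides with that of the Cayley graph Γ(G,S). -/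
/-- For a connected `NP_1`-digital topological group `G`, the set
`S` of points adjacent to the identity generates `G`, and the adjacency of `G`
coincides with that of the Cayley graph `Γ(G,S)`. -/
theorem np1_connected_dtg_cayley (G : DigImage) [Group G.carrier]
    (hmul : DigContinuous (DigImage.prod 1 G G) G (fun p => p.1 * p.2))
    (hinv : DigContinuous G G (fun a => a⁻¹))
    (hconn : DigConnected G) :
    Subgroup.closure {s : G.carrier | G.adj s 1} = ⊤ ∧
    ∀ a b : G.carrier,
      G.adj a b ↔
        (a * b⁻¹ ∈ {s : G.carrier | G.adj s 1} ∨
         b * a⁻¹ ∈ {s : G.carrier | G.adj s 1}) := by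
  have hR : ∀ a b c : G.carrier, G.adj a b → G.adj (a * c) (b * c) := by
    intro a b c h
    exact hmul (show (DigImage.prod 1 G G).adj (a, c) (b, c) by
      simp only [DigImage.prod, if_pos (le_refl 1)]
      exact Or.inr ⟨trivial, h⟩)
  constructor
  · rw [eq_top_iff]
    intro g _
    have : ∀ x : G.carrier, Relation.ReflTransGen G.adj 1 x →
        x ∈ Subgroup.closure {s : G.carrier | G.adj s 1} := by
      intro x hx
      induction hx with
      | refl => exact Subgroup.one_mem _
      | tail hab hstep ih =>
        rename_i a b
        have h1 : G.adj (b * a⁻¹) 1 := by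
          have := hR a b a⁻¹ hstep
          rw [mul_inv_cancel] at this
          exact G.adj_symm this
        have : b * a⁻¹ * a ∈ Subgroup.closure {s : G.carrier | G.adj s 1} :=
          Subgroup.mul_mem _ (Subgroup.subset_closure h1) ih
        simpa using this
    exact this g (hconn 1 g)
  · intro a b
    constructor
    · intro h
      left
      have := hR a b b⁻¹ h
      rw [mul_inv_cancel] at this
      exact this
    · rintro (h | h)
      · have := hR (a * b⁻¹) 1 b h
        rw [one_mul, inv_mul_cancel_right] at this
        exact this
      · have := hR (b * a⁻¹) 1 a h
        rw [one_mul, inv_mul_cancel_right] at this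
        exact G.adj_symm this
end
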